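/- arXiv:1007.3401 — 2 statements merged into one kernel-verified Lean document; each statement's English description precedes it below -/
import Mathlib

section
/- Let β > 0, ν > 0 and let γ = (γ_n)_{n≥1} be a non-zero stationary solution of the viscous dyadic model, and let n₀ be the first index such that γ_{n₀} ≠ 0. Then there is c > 0 such that λ_n^{β-2} |γ_n| ≥ c for all n ≥ n₀. -/
/-- The dyadic frequencies: `λ_0 = 0`, `λ_n = 2^n` for `n ≥ 1`. -/
noncomputable def lam (n : ℕ) : ℝ := if n = 0 then 0 else 2 ^ n

/-- `g` is a stationary solution of the viscous dyadic model with parameter `β`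
and viscosity `ν` (the convention `λ_0 = 0` kills the last term for `n = 1`). -/
def IsStationarySolution (β ν : ℝ) (g : ℕ → ℝ) : Prop :=
  ∀ n, 1 ≤ n →
    ν * lam n ^ 2 * g n + lam n ^ β * g n * g (n + 1)
      - lam (n - 1) ^ β * g (n - 1) ^ 2 = 0

lemma lam_eq {n : ℕ} (hn : 1 ≤ n) : lam n = (2:ℝ) ^ (n:ℝ) := by
  have : n ≠ 0 := Nat.one_le_iff_ne_zero.mp hn
  simp [lam, this, Real.rpow_natCast]

lemma lam_pos {n : ℕ} (hn : 1 ≤ n) : 0 < lam n := by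
  rw [lam_eq hn]; positivity

lemma lam_rpow {n : ℕ} (hn : 1 ≤ n) (x : ℝ) :
    lam n ^ x = (2:ℝ) ^ ((n:ℝ) * x) := by
  rw [lam_eq hn, Real.rpow_mul (by norm_num : (0:ℝ) ≤ 2)]

lemma lam_sq {n : ℕ} (hn : 1 ≤ n) : lam n ^ (2:ℕ) = lam n ^ (2:ℝ) := by
  rw [← Real.rpow_natCast (lam n) 2]; norm_num

/-- if `n₀` is the first index at which a non-zero stationary solution
does not vanish, then there is `c > 0` with `λ_n^{β-2} |γ_n| ≥ c` for all `n ≥ n₀`. -/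
theorem stationary_critical_decay
    (β ν : ℝ) (hβ : 0 < β) (hν : 0 < ν)
    (g : ℕ → ℝ) (hg : IsStationarySolution β ν g)
    (n₀ : ℕ) (hn₀ : 1 ≤ n₀) (hne : g n₀ ≠ 0)
    (hfirst : ∀ n, 1 ≤ n → n < n₀ → g n = 0) :
    ∃ c : ℝ, 0 < c ∧ ∀ n, n₀ ≤ n → c ≤ lam n ^ (β - 2) * |g n| := by
  have key : ∀ n, n₀ ≤ n → g n ≠ 0 ∧ g (n+1) ≤ -(ν * lam n ^ (2 - β)) := by
    intro n hn
    induction n, hn using Nat.le_induction with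
    | base =>
      refine ⟨hne, ?_⟩
      have hrec := hg n₀ hn₀
      have hz : lam (n₀ - 1) ^ β * g (n₀ - 1) ^ 2 = 0 := by
        rcases eq_or_lt_of_le hn₀ with h1 | h1
        · have : n₀ - 1 = 0 := by omega
          rw [this]
          simp [lam, Real.zero_rpow hβ.ne']
        · have h1' : 1 ≤ n₀ - 1 := by omega
          rw [hfirst (n₀-1) h1' (by omega)]
          ring
      have hfac : g n₀ * (ν * lam n₀ ^ 2 + lam n₀ ^ β * g (n₀+1)) = 0 := by
        rw [hz] at hrec; linarith [hrec]
      have h2 : ν * lam n₀ ^ 2 + lam n₀ ^ β * g (n₀+1) = 0 :=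
        (mul_eq_zero.mp hfac).resolve_left hne
      have hlb : (0:ℝ) < lam n₀ ^ β := Real.rpow_pos_of_pos (lam_pos hn₀) β
      have hid : lam n₀ ^ β * (ν * lam n₀ ^ (2 - β)) = ν * lam n₀ ^ 2 := by
        rw [lam_sq hn₀, mul_comm ν, ← mul_assoc, ← Real.rpow_add (lam_pos hn₀)]
        ring_nf
      nlinarith [hlb]
    | succ n hn ih =>
      obtain ⟨hgn, hb⟩ := ih
      have hn1 : 1 ≤ n := le_trans hn₀ hn
      have hposb : 0 < ν * lam n ^ (2 - β) :=
        mul_pos hν (Real.rpow_pos_of_pos (lam_pos hn1) _)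
      have hgn1 : g (n+1) < 0 := lt_of_le_of_lt hb (by linarith)
      refine ⟨ne_of_lt hgn1, ?_⟩
      have hrec := hg (n+1) (by omega)
      simp only [Nat.add_sub_cancel] at hrec
      have hrhs : 0 < lam n ^ β * g n ^ 2 := by
        have := Real.rpow_pos_of_pos (lam_pos hn1) β
        positivity
      have hfac : g (n+1) * (ν * lam (n+1) ^ 2 + lam (n+1) ^ β * g (n+2)) > 0 := by
        nlinarith [hrec]
      have hneg : ν * lam (n+1) ^ 2 + lam (n+1) ^ β * g (n+2) < 0 := by
        by_contra h
        push_neg at h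
        nlinarith
      have hlb : (0:ℝ) < lam (n+1) ^ β := Real.rpow_pos_of_pos (lam_pos (by omega)) β
      have hid : lam (n+1) ^ β * (ν * lam (n+1) ^ (2 - β)) = ν * lam (n+1) ^ 2 := by
        rw [lam_sq (show 1 ≤ n+1 by omega), mul_comm ν, ← mul_assoc,
          ← Real.rpow_add (lam_pos (show 1 ≤ n+1 by omega))]
        ring_nf
      nlinarith
  have tail : ∀ n, n₀ < n → ν * (2:ℝ) ^ (β - 2) ≤ lam n ^ (β - 2) * |g n| := by
    intro n hn
    obtain ⟨m, rfl⟩ : ∃ m, n = m + 1 := ⟨n - 1, by omega⟩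
    have hm : n₀ ≤ m := by omega
    obtain ⟨-, hb⟩ := key m hm
    have hm1 : 1 ≤ m := le_trans hn₀ hm
    have habs : ν * lam m ^ (2 - β) ≤ |g (m+1)| := by
      have h := neg_le_abs (g (m+1))
      linarith
    have hpow : (0:ℝ) < lam (m+1) ^ (β - 2) :=
      Real.rpow_pos_of_pos (lam_pos (by omega)) _
    calc ν * (2:ℝ) ^ (β - 2) = lam (m+1) ^ (β - 2) * (ν * lam m ^ (2 - β)) := by
          have e1 : (2:ℝ) ^ (((m+1:ℕ):ℝ) * (β-2)) * (2:ℝ) ^ ((m:ℝ) * (2-β))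
              = (2:ℝ) ^ (β-2) := by
            rw [← Real.rpow_add (by norm_num : (0:ℝ) < 2)]
            congr 1
            push_cast
            ring
          rw [lam_rpow (by omega : 1 ≤ m+1), lam_rpow hm1, ← e1]
          ring
      _ ≤ lam (m+1) ^ (β - 2) * |g (m+1)| := by
          exact mul_le_mul_of_nonneg_left habs hpow.le
  refine ⟨min (lam n₀ ^ (β - 2) * |g n₀|) (ν * (2:ℝ) ^ (β - 2)), ?_, ?_⟩
  · apply lt_min
    · exact mul_pos (Real.rpow_pos_of_pos (lam_pos hn₀) _) (abs_pos.mpr hne)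
    · positivity
  · intro n hn
    rcases eq_or_lt_of_le hn with rfl | h
    · exact le_trans (min_le_left _ _) le_rfl
    · exact le_trans (min_le_right _ _) (tail n h)
end

section
/- Let β = 5/2 and γ > 1/2. If X and Y are two global-in-time weak solutions of the inviscid dyadic model on [0,∞) with the same componentwise nonnegative initial condition, and both satisfy sup_{t≥0} sup_{n≥1} (λ_n^γ |X_n(t)|) < ∞ and sup_{t≥0} sup_{n≥1} (λ_n^γ |Y_n(t)|) < ∞, then X = Y. -/
/-- `X` is a weak solution of the inviscid dyadic model with parameter `β` on `I`. -/
def IsInviscidSolution (β : ℝ) (I : Set ℝ) (X : ℕ → ℝ → ℝ) : Prop :=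
  ∀ n, 1 ≤ n → ∀ t ∈ I, HasDerivWithinAt (X n)
    (lam (n - 1) ^ β * (X (n - 1) t) ^ 2 - lam n ^ β * X n t * X (n + 1) t) I t


open Set Filter Topology

theorem lam_of_ne_zero {n : ℕ} (hn : n ≠ 0) : lam n = 2 ^ n := if_neg hn

theorem lam_nonneg (n : ℕ) : 0 ≤ lam n := by
  unfold lam; split_ifs <;> positivity

theorem lam_zero_rpow {β : ℝ} (hβ : β ≠ 0) : lam 0 ^ β = 0 := by
  rw [lam, if_pos rfl, Real.zero_rpow hβ]

theorem lam_rpow_of_ne_zero {n : ℕ} (hn : n ≠ 0) (s : ℝ) : lam n ^ s = (2 ^ s) ^ n := by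
  rw [lam_of_ne_zero hn, ← Real.rpow_natCast_mul zero_le_two, mul_comm,
    Real.rpow_mul_natCast zero_le_two]

theorem abs_le_mul_inv_two_rpow_pow {γ C x : ℝ} {n : ℕ} (hn : n ≠ 0)
    (h : lam n ^ γ * |x| ≤ C) : |x| ≤ C * ((2 ^ γ)⁻¹) ^ n := by
  rw [lam_rpow_of_ne_zero hn] at h
  rw [inv_pow, ← div_eq_mul_inv, le_div_iff₀ (by positivity), mul_comm]
  exact h

/-- Barrier argument: `-f` stays below `ε * exp ((|M| + 1) (x - a))` for every `ε > 0`. -/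
theorem nonneg_of_deriv_right_ge_mul {f f' : ℝ → ℝ} {a b M : ℝ}
    (hf : ContinuousOn f (Icc a b)) (hf' : ∀ x ∈ Ico a b, HasDerivWithinAt f (f' x) (Ici x) x)
    (ha : 0 ≤ f a) (hM : ∀ x ∈ Ico a b, f x < 0 → M * f x ≤ f' x) :
    ∀ x ∈ Icc a b, 0 ≤ f x := by
  intro x hx
  set K := |M| + 1
  have hbarrier : ∀ ε > 0, -f x ≤ ε * Real.exp (K * (x - a)) := by
    intro ε hε
    refine image_le_of_deriv_right_lt_deriv_boundary (f' := fun y => -f' y)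
      (B := fun y => ε * Real.exp (K * (y - a))) (B' := fun y => K * (ε * Real.exp (K * (y - a))))
      hf.neg (fun y hy => (hf' y hy).neg)
      (by simp only [Pi.neg_apply, sub_self, mul_zero, Real.exp_zero, mul_one]; linarith)
      (fun y => ?_) ?_ hx
    · exact ((((hasDerivAt_id' y).sub_const a).const_mul K).exp.const_mul ε).congr_deriv
        (by ring)
    · intro y hy hfy
      simp only [Pi.neg_apply] at hfy
      have hB : 0 < ε * Real.exp (K * (y - a)) := by positivity
      have hle := hM y hy (by linarith)
      nlinarith [le_abs_self M, neg_abs_le M]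
  refine neg_nonpos.1 (le_of_forall_pos_le_add fun δ hδ => ?_)
  have hexp : 0 < Real.exp (K * (x - a)) := Real.exp_pos _
  simpa [div_mul_cancel₀ _ hexp.ne'] using hbarrier (δ / Real.exp (K * (x - a))) (by positivity)

theorem IsInviscidSolution.nonneg {β : ℝ} {X : ℕ → ℝ → ℝ}
    (hX : IsInviscidSolution β (Ici 0) X) (h0 : ∀ n, 1 ≤ n → 0 ≤ X n 0) :
    ∀ n, 1 ≤ n → ∀ t ∈ Ici (0 : ℝ), 0 ≤ X n t := by
  intro n hn t ht
  have hcont : ∀ m, 1 ≤ m → ContinuousOn (X m) (Icc 0 t) := fun m hm s hs =>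
    (hX m hm s hs.1).continuousWithinAt.mono Icc_subset_Ici_self
  obtain ⟨K, hK⟩ := isCompact_Icc.exists_bound_of_continuousOn (hcont (n + 1) (by omega))
  refine nonneg_of_deriv_right_ge_mul (M := lam n ^ β * K) (hcont n hn)
    (fun s hs => (hX n hn s hs.1).mono (Ici_subset_Ici.2 hs.1)) (h0 n hn)
    (fun s hs hXs => ?_) t ⟨ht, le_rfl⟩
  have hsource : 0 ≤ lam (n - 1) ^ β * X (n - 1) s ^ 2 :=
    mul_nonneg (Real.rpow_nonneg (lam_nonneg _) _) (sq_nonneg _)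
  have hlam : 0 ≤ lam n ^ β := Real.rpow_nonneg (lam_nonneg n) _
  have hnext : -K ≤ X (n + 1) s := neg_le_of_abs_le (hK s (Ico_subset_Icc_self hs))
  nlinarith [mul_le_mul_of_nonneg_left hnext (mul_nonneg hlam (neg_nonneg.2 hXs.le))]

/-- The weights `2⁻¹ ^ n` are chosen so that the transfer terms cancel in pairs. -/
theorem sum_Icc_weighted_flux_telescope (a x y : ℕ → ℝ) (ha : a 0 = 0) (N : ℕ) :
    ∑ n ∈ Finset.Icc 1 N, (2 : ℝ)⁻¹ ^ n * (2 * (x n - y n) *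
        (a (n - 1) * (x (n - 1) ^ 2 - y (n - 1) ^ 2) - a n * (x n * x (n + 1) - y n * y (n + 1))))
      = -((2 : ℝ)⁻¹ ^ N * a N * (x N + y N) * (x N - y N) * (x (N + 1) - y (N + 1)))
        - ∑ n ∈ Finset.Icc 1 N,
          (2 : ℝ)⁻¹ ^ n * a n * (x (n + 1) + y (n + 1)) * (x n - y n) ^ 2 := by
  induction N with
  | zero => simp [ha]
  | succ N ih =>
    rw [Finset.sum_Icc_succ_top (by omega), Finset.sum_Icc_succ_top (by omega), ih,
      Nat.add_sub_cancel]
    ring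

noncomputable def diffEnergy (X Y : ℕ → ℝ → ℝ) (N : ℕ) (t : ℝ) : ℝ :=
  ∑ n ∈ Finset.Icc 1 N, (2 : ℝ)⁻¹ ^ n * (X n t - Y n t) ^ 2

theorem IsInviscidSolution.hasDerivWithinAt_diffEnergy {β : ℝ} (hβ : β ≠ 0) {I : Set ℝ}
    {X Y : ℕ → ℝ → ℝ} (hX : IsInviscidSolution β I X) (hY : IsInviscidSolution β I Y)
    (N : ℕ) {t : ℝ} (ht : t ∈ I) :
    HasDerivWithinAt (diffEnergy X Y N)
      (-((2 : ℝ)⁻¹ ^ N * lam N ^ β * (X N t + Y N t) * (X N t - Y N t)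
          * (X (N + 1) t - Y (N + 1) t))
        - ∑ n ∈ Finset.Icc 1 N,
          (2 : ℝ)⁻¹ ^ n * lam n ^ β * (X (n + 1) t + Y (n + 1) t) * (X n t - Y n t) ^ 2) I t := by
  rw [← sum_Icc_weighted_flux_telescope (fun n => lam n ^ β) (X · t) (Y · t) (lam_zero_rpow hβ)]
  refine HasDerivWithinAt.fun_sum fun n hn => ?_
  have hn : 1 ≤ n := (Finset.mem_Icc.1 hn).1
  exact ((((hX n hn t ht).sub (hY n hn t ht)).pow 2).const_mul _).congr_deriv
    (by simp only [Pi.sub_apply]; ring)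

theorem diffEnergy_eq_zero_of_eq {X Y : ℕ → ℝ → ℝ} {t : ℝ} (h : ∀ n, 1 ≤ n → X n t = Y n t)
    (N : ℕ) : diffEnergy X Y N t = 0 :=
  Finset.sum_eq_zero fun n hn => by rw [h n (Finset.mem_Icc.1 hn).1, sub_self]; ring

theorem inv_two_pow_mul_sq_le_diffEnergy (X Y : ℕ → ℝ → ℝ) {n N : ℕ} (hn : 1 ≤ n) (hnN : n ≤ N)
    (t : ℝ) : (2 : ℝ)⁻¹ ^ n * (X n t - Y n t) ^ 2 ≤ diffEnergy X Y N t :=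
  Finset.single_le_sum (f := fun m => (2 : ℝ)⁻¹ ^ m * (X m t - Y m t) ^ 2)
    (fun _ _ => by positivity) (Finset.mem_Icc.2 ⟨hn, hnN⟩)

theorem abs_boundaryFlux_le {β C ρ : ℝ} (hC : 0 ≤ C) (hρ0 : 0 ≤ ρ) (hρ1 : ρ ≤ 1)
    {N : ℕ} (hN : N ≠ 0) {s d e : ℝ} (hs : |s| ≤ 2 * C * ρ ^ N) (hd : |d| ≤ 2 * C * ρ ^ N)
    (he : |e| ≤ 2 * C * ρ ^ (N + 1)) :
    |(2 : ℝ)⁻¹ ^ N * lam N ^ β * s * d * e| ≤ 8 * C ^ 3 * ((2 : ℝ)⁻¹ * 2 ^ β * ρ ^ 3) ^ N := by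
  have he' : |e| ≤ 2 * C * ρ ^ N :=
    he.trans (mul_le_mul_of_nonneg_left (pow_le_pow_of_le_one hρ0 hρ1 N.le_succ) (by positivity))
  rw [abs_mul, abs_mul, abs_mul, abs_mul, abs_of_nonneg (by positivity),
    abs_of_nonneg (Real.rpow_nonneg (lam_nonneg N) β), lam_rpow_of_ne_zero hN]
  calc (2 : ℝ)⁻¹ ^ N * (2 ^ β) ^ N * |s| * |d| * |e|
      ≤ (2 : ℝ)⁻¹ ^ N * (2 ^ β) ^ N * (2 * C * ρ ^ N) * (2 * C * ρ ^ N) * (2 * C * ρ ^ N) := by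
        gcongr
    _ = 8 * C ^ 3 * ((2 : ℝ)⁻¹ * 2 ^ β * ρ ^ 3) ^ N := by ring

theorem IsInviscidSolution.diffEnergy_le {β C ρ : ℝ} (hβ : β ≠ 0) (hρ0 : 0 < ρ) (hρ1 : ρ ≤ 1)
    {X Y : ℕ → ℝ → ℝ} (hX : IsInviscidSolution β (Ici 0) X) (hY : IsInviscidSolution β (Ici 0) Y)
    (hXnn : ∀ n, 1 ≤ n → ∀ t ∈ Ici (0 : ℝ), 0 ≤ X n t)
    (hYnn : ∀ n, 1 ≤ n → ∀ t ∈ Ici (0 : ℝ), 0 ≤ Y n t)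
    (hXb : ∀ t ∈ Ici (0 : ℝ), ∀ n, 1 ≤ n → |X n t| ≤ C * ρ ^ n)
    (hYb : ∀ t ∈ Ici (0 : ℝ), ∀ n, 1 ≤ n → |Y n t| ≤ C * ρ ^ n)
    {N : ℕ} (hN : 1 ≤ N) {t : ℝ} (ht : 0 ≤ t) :
    diffEnergy X Y N t ≤ diffEnergy X Y N 0 + 8 * C ^ 3 * ((2 : ℝ)⁻¹ * 2 ^ β * ρ ^ 3) ^ N * t := by
  have hC : 0 ≤ C := (mul_nonneg_iff_of_pos_right (pow_pos hρ0 1)).1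
    ((abs_nonneg _).trans (hXb 0 self_mem_Ici 1 le_rfl))
  have hsum : ∀ s ∈ Ici (0 : ℝ), ∀ n, 1 ≤ n → |X n s + Y n s| ≤ 2 * C * ρ ^ n :=
    fun s hs n hn => by linarith [abs_add_le (X n s) (Y n s), hXb s hs n hn, hYb s hs n hn]
  have hdiff : ∀ s ∈ Ici (0 : ℝ), ∀ n, 1 ≤ n → |X n s - Y n s| ≤ 2 * C * ρ ^ n :=
    fun s hs n hn => by linarith [abs_sub (X n s) (Y n s), hXb s hs n hn, hYb s hs n hn]
  have hderiv := fun s (hs : s ∈ Ici (0 : ℝ)) => hX.hasDerivWithinAt_diffEnergy hβ hY N hs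
  refine image_le_of_deriv_right_le_deriv_boundary
    (B := fun s => diffEnergy X Y N 0 + 8 * C ^ 3 * ((2 : ℝ)⁻¹ * 2 ^ β * ρ ^ 3) ^ N * s)
    (fun s hs => (hderiv s hs.1).continuousWithinAt.mono Icc_subset_Ici_self)
    (fun s hs => (hderiv s hs.1).mono (Ici_subset_Ici.2 hs.1)) (by simp)
    (by fun_prop) (fun s _ => ((hasDerivWithinAt_id s _).const_mul _).const_add _)
    (fun s hs => ?_) ⟨ht, le_rfl⟩
  have hboundary := abs_boundaryFlux_le (β := β) hC hρ0.le hρ1 (by omega) (hsum s hs.1 N hN)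
    (hdiff s hs.1 N hN) (hdiff s hs.1 (N + 1) (by omega))
  have hdissipation : 0 ≤ ∑ n ∈ Finset.Icc 1 N,
      (2 : ℝ)⁻¹ ^ n * lam n ^ β * (X (n + 1) s + Y (n + 1) s) * (X n s - Y n s) ^ 2 :=
    Finset.sum_nonneg fun n hn => by
      have hn : 1 ≤ n := (Finset.mem_Icc.1 hn).1
      have hS := add_nonneg (hXnn (n + 1) (by omega) s hs.1) (hYnn (n + 1) (by omega) s hs.1)
      have hlam := Real.rpow_nonneg (lam_nonneg n) β
      positivity
  simp only [mul_one]
  linarith [neg_abs_le ((2 : ℝ)⁻¹ ^ N * lam N ^ β * (X N s + Y N s) * (X N s - Y N s)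
    * (X (N + 1) s - Y (N + 1) s))]

theorem inv_two_mul_two_rpow_mul_inv_pow_three_lt_one {β γ : ℝ} (h : β < 1 + 3 * γ) :
    (2 : ℝ)⁻¹ * 2 ^ β * ((2 ^ γ)⁻¹) ^ 3 < 1 := by
  have hpow : 2 * ((2 : ℝ) ^ γ) ^ 3 = 2 ^ (1 + 3 * γ) := by
    rw [← Real.rpow_mul_natCast zero_le_two, Real.rpow_add two_pos, Real.rpow_one]
    ring_nf
  rw [inv_pow, ← div_eq_mul_inv, inv_mul_eq_div, div_div, div_lt_one (by positivity), hpow]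
  exact Real.rpow_lt_rpow_of_exponent_lt one_lt_two h

/-- for `β = 5/2` and `γ > 1/2`, two global weak solutions of the
inviscid dyadic model with the same nonnegative initial condition, both bounded
in the `λ_n^γ` scaling, coincide. -/
theorem inviscid_uniqueness_gamma
    (γ : ℝ) (hγ : 1 / 2 < γ)
    (X Y : ℕ → ℝ → ℝ)
    (hX : IsInviscidSolution (5 / 2) (Set.Ici 0) X)
    (hY : IsInviscidSolution (5 / 2) (Set.Ici 0) Y)
    (hpos : ∀ n, 1 ≤ n → 0 ≤ X n 0)
    (hinit : ∀ n, 1 ≤ n → X n 0 = Y n 0)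
    (hbX : ∃ C : ℝ, ∀ t ∈ Set.Ici (0 : ℝ), ∀ n, 1 ≤ n → lam n ^ γ * |X n t| ≤ C)
    (hbY : ∃ C : ℝ, ∀ t ∈ Set.Ici (0 : ℝ), ∀ n, 1 ≤ n → lam n ^ γ * |Y n t| ≤ C) :
    ∀ n, 1 ≤ n → ∀ t ∈ Set.Ici (0 : ℝ), X n t = Y n t := by
  obtain ⟨C₁, hC₁⟩ := hbX
  obtain ⟨C₂, hC₂⟩ := hbY
  set C := max C₁ C₂
  set ρ : ℝ := (2 ^ γ)⁻¹
  have hρ0 : 0 < ρ := by positivity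
  have hρ1 : ρ ≤ 1 := inv_le_one_of_one_le₀ (Real.one_le_rpow one_le_two (by linarith))
  have hXb : ∀ t ∈ Ici (0 : ℝ), ∀ n, 1 ≤ n → |X n t| ≤ C * ρ ^ n := fun t ht n hn =>
    abs_le_mul_inv_two_rpow_pow (by omega) ((hC₁ t ht n hn).trans (le_max_left _ _))
  have hYb : ∀ t ∈ Ici (0 : ℝ), ∀ n, 1 ≤ n → |Y n t| ≤ C * ρ ^ n := fun t ht n hn =>
    abs_le_mul_inv_two_rpow_pow (by omega) ((hC₂ t ht n hn).trans (le_max_right _ _))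
  set κ : ℝ := 2⁻¹ * 2 ^ (5 / 2 : ℝ) * ρ ^ 3
  have hκ : κ < 1 := inv_two_mul_two_rpow_mul_inv_pow_three_lt_one (by linarith)
  intro n hn t ht
  have hbound : ∀ N, n ≤ N → (2 : ℝ)⁻¹ ^ n * (X n t - Y n t) ^ 2 ≤ 8 * C ^ 3 * κ ^ N * t :=
    fun N hN => (inv_two_pow_mul_sq_le_diffEnergy X Y hn hN t).trans <| by
      simpa [diffEnergy_eq_zero_of_eq hinit] using
        hX.diffEnergy_le (by norm_num) hρ0 hρ1 hY (hX.nonneg hpos)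
          (hY.nonneg fun m hm => hinit m hm ▸ hpos m hm) hXb hYb (hn.trans hN) ht
  have hlim : Tendsto (fun N => 8 * C ^ 3 * κ ^ N * t) atTop (𝓝 0) := by
    simpa using ((tendsto_pow_atTop_nhds_zero_of_lt_one (by positivity) hκ).const_mul
      (8 * C ^ 3)).mul_const t
  have hsq : (X n t - Y n t) ^ 2 ≤ 0 :=
    nonpos_of_mul_nonpos_right (ge_of_tendsto hlim (eventually_atTop.2 ⟨n, hbound⟩)) (by positivity)
  exact sub_eq_zero.1 (pow_eq_zero_iff two_ne_zero |>.1 (hsq.antisymm (sq_nonneg _)))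
end
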